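/- arXiv:1210.3717 — 7 statements merged into one kernel-verified Lean document; each statement's English description precedes it below -/
import Mathlib

section
/- Let φ : ℝ → ℝ be continuous with φ([0,1]) ⊆ [0,1], φ(0) = 0 and φ(1) = 1. Suppose φ is differentiable at 0 from the right and at 1 from the left, with both one-sided derivatives equal to 0 (i.e., φ has derivative 0 at 0 within [0,∞) and derivative 0 at 1 within (−∞,1]). Then there exists h ∈ (0,1) with φ(h) = h. -/
open Set Filter Topology

/-! Apply the intermediate value theorem to `φ x - x`: it vanishes at both endpoints and has
one-sided derivative `-1` there, so it is negative just right of `0` and positive just left of `1`. -/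

theorem HasDerivWithinAt.eventually_lt_right_of_neg {f : ℝ → ℝ} {f' x : ℝ}
    (hf : HasDerivWithinAt f f' (Ici x) x) (hf' : f' < 0) : ∀ᶠ z in 𝓝[>] x, f z < f x := by
  filter_upwards [hf.Ioi_of_Ici.limsup_slope_le' (lt_irrefl x) hf', self_mem_nhdsWithin]
    with z hslope (hxz : x < z)
  rw [slope_def_field, div_neg_iff] at hslope
  rcases hslope with ⟨-, h⟩ | ⟨h, -⟩ <;> linarith

theorem HasDerivWithinAt.eventually_gt_left_of_neg {f : ℝ → ℝ} {f' x : ℝ}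
    (hf : HasDerivWithinAt f f' (Iic x) x) (hf' : f' < 0) : ∀ᶠ z in 𝓝[<] x, f x < f z := by
  filter_upwards [hf.Iio_of_Iic.limsup_slope_le' (lt_irrefl x) hf', self_mem_nhdsWithin]
    with z hslope (hzx : z < x)
  rw [slope_def_field, div_neg_iff] at hslope
  rcases hslope with ⟨h, -⟩ | ⟨-, h⟩ <;> linarith

theorem exists_mem_Ioo_eq_zero_of_hasDerivWithinAt_neg {f : ℝ → ℝ} {a b f'a f'b : ℝ}
    (hab : a < b) (hf : ContinuousOn f (Icc a b)) (ha : f a = 0) (hb : f b = 0)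
    (hda : HasDerivWithinAt f f'a (Ici a) a) (hf'a : f'a < 0)
    (hdb : HasDerivWithinAt f f'b (Iic b) b) (hf'b : f'b < 0) :
    ∃ c ∈ Ioo a b, f c = 0 := by
  obtain ⟨u, hu_neg, hu⟩ :=
    ((hda.eventually_lt_right_of_neg hf'a).and (Ioo_mem_nhdsGT hab)).exists
  obtain ⟨v, hv_pos, hv⟩ :=
    ((hdb.eventually_gt_left_of_neg hf'b).and (Ioo_mem_nhdsLT hu.2)).exists
  rw [ha] at hu_neg
  rw [hb] at hv_pos
  obtain ⟨c, hc, hfc⟩ := intermediate_value_Ioo hv.1.le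
    (hf.mono (Icc_subset_Icc hu.1.le hv.2.le)) ⟨hu_neg, hv_pos⟩
  exact ⟨c, ⟨hu.1.trans hc.1, hc.2.trans hv.2⟩, hfc⟩

theorem exists_interior_fixed_point_general (φ : ℝ → ℝ) (hφ : Continuous φ)
    (h0 : φ 0 = 0) (h1 : φ 1 = 1)
    (hd0 : HasDerivWithinAt φ 0 (Ici (0 : ℝ)) 0)
    (hd1 : HasDerivWithinAt φ 0 (Iic (1 : ℝ)) 1) :
    ∃ h ∈ Ioo (0 : ℝ) 1, φ h = h := by
  obtain ⟨c, hc, hφc⟩ := exists_mem_Ioo_eq_zero_of_hasDerivWithinAt_neg (f := fun x ↦ φ x - x)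
    zero_lt_one (hφ.sub continuous_id).continuousOn (by simp [h0]) (by simp [h1])
    (hd0.sub (hasDerivWithinAt_id 0 _)) (by norm_num)
    (hd1.sub (hasDerivWithinAt_id 1 _)) (by norm_num)
  exact ⟨c, hc, sub_eq_zero.mp hφc⟩

/-- If `φ : [0,1] → [0,1]` is continuous, fixes `0` and `1`, and has one-sided derivative
zero at both endpoints, then `φ` has a fixed point in the open interval `(0,1)`. -/
theorem exists_interior_fixed_point (φ : ℝ → ℝ) (hφ : Continuous φ)
    (hmaps : MapsTo φ (Icc (0 : ℝ) 1) (Icc (0 : ℝ) 1))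
    (h0 : φ 0 = 0) (h1 : φ 1 = 1)
    (hd0 : HasDerivWithinAt φ 0 (Ici (0 : ℝ)) 0)
    (hd1 : HasDerivWithinAt φ 0 (Iic (1 : ℝ)) 1) :
    ∃ h ∈ Ioo (0 : ℝ) 1, φ h = h :=
  exists_interior_fixed_point_general φ hφ h0 h1 hd0 hd1
end

section
/- Let f : ℂ → ℂ be differentiable at 0 (over ℝ) with f(0) = 0, and suppose f carries each circle centered at 0 into a circle centered at 0, in the sense that for all z, w ∈ ℂ, ‖z‖ = ‖w‖ implies ‖f(z)‖ = ‖f(w)‖. Then there exists c ≥ 0 such that the derivative L = fderiv ℝ f 0 satisfies ‖L(v)‖ = c·‖v‖ for all v ∈ ℂ. -/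
/-! `‖f'(0) u‖` is the limit of `‖f (t • u)‖ / |t|` as `t → 0`, and by hypothesis this quotient
depends on `u` only through `‖u‖`. So `‖f'(0) u‖` depends only on `‖u‖`, and homogeneity of
`f'(0)` gives `‖f'(0) v‖ = ‖f'(0) 1‖ * ‖v‖`. -/

open Filter Topology

section

variable {E F : Type*} [NormedAddCommGroup E] [NormedSpace ℝ E]
  [NormedAddCommGroup F] [NormedSpace ℝ F]

theorem tendsto_norm_div_abs_norm_fderiv_apply {f : E → F} (hf : DifferentiableAt ℝ f 0)
    (h0 : f 0 = 0) (u : E) :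
    Tendsto (fun t : ℝ => ‖f (t • u)‖ / |t|) (𝓝[≠] 0) (𝓝 ‖fderiv ℝ f 0 u‖) := by
  have hline : HasDerivAt (fun t : ℝ => f (t • u)) (fderiv ℝ f 0 u) 0 := by
    have hf' : HasFDerivAt f (fderiv ℝ f 0) ((0 : ℝ) • u) := by
      simpa using hf.hasFDerivAt
    have hray : HasDerivAt (fun t : ℝ => t • u) u 0 := by
      simpa using (hasDerivAt_id (0 : ℝ)).smul_const u
    exact hf'.comp_hasDerivAt 0 hray
  refine (hasDerivAt_iff_tendsto_slope.mp hline).norm.congr' ?_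
  filter_upwards [self_mem_nhdsWithin] with t ht
  simp [slope, h0, norm_smul, div_eq_inv_mul]

theorem norm_fderiv_apply_eq_of_forall_norm_eq {f : E → F} (hf : DifferentiableAt ℝ f 0)
    (h0 : f 0 = 0) {u v : E} (huv : ∀ t : ℝ, ‖f (t • u)‖ = ‖f (t • v)‖) :
    ‖fderiv ℝ f 0 u‖ = ‖fderiv ℝ f 0 v‖ :=
  tendsto_nhds_unique (tendsto_norm_div_abs_norm_fderiv_apply hf h0 u)
    (by simpa only [huv] using tendsto_norm_div_abs_norm_fderiv_apply hf h0 v)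

theorem ContinuousLinearMap.norm_apply_eq_mul_norm_of_norm_eq (L : E →L[ℝ] F)
    (hL : ∀ u v : E, ‖u‖ = ‖v‖ → ‖L u‖ = ‖L v‖) {e : E} (he : ‖e‖ = 1) (v : E) :
    ‖L v‖ = ‖L e‖ * ‖v‖ := by
  rw [hL v (‖v‖ • e) (by simp [norm_smul, he]), map_smul, norm_smul, norm_norm, mul_comm]

end

/-- If `f : ℂ → ℂ` is real-differentiable at `0`, fixes `0`, and carries each circle
centered at `0` into a circle centered at `0`, then its derivative at `0` multiplies all
norms by a fixed constant `c ≥ 0`. -/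
theorem fderiv_of_circle_preserving (f : ℂ → ℂ) (hf : DifferentiableAt ℝ f 0) (h0 : f 0 = 0)
    (hcirc : ∀ z w : ℂ, ‖z‖ = ‖w‖ → ‖f z‖ = ‖f w‖) :
    ∃ c : ℝ, 0 ≤ c ∧ ∀ v : ℂ, ‖fderiv ℝ f 0 v‖ = c * ‖v‖ := by
  have hL : ∀ u w : ℂ, ‖u‖ = ‖w‖ → ‖fderiv ℝ f 0 u‖ = ‖fderiv ℝ f 0 w‖ := fun u w huw =>
    norm_fderiv_apply_eq_of_forall_norm_eq hf h0 fun t =>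
      hcirc _ _ (by rw [norm_smul, norm_smul, huw])
  exact ⟨_, norm_nonneg _, (fderiv ℝ f 0).norm_apply_eq_mul_norm_of_norm_eq hL norm_one⟩
end

section
/- Let f : ℂ → ℂ be differentiable at 0 (over ℝ) with f(0) = 0, and suppose for all z, w ∈ ℂ, ‖z‖ = ‖w‖ implies ‖f(z)‖ = ‖f(w)‖. Suppose moreover there is an integer k with |k| ≥ 2 such that for every r > 0 there is a continuous g : ℝ → ℝ with g(θ+1) = g(θ) + k for all θ, and f(r·exp(2πiθ)) = ‖f(r)‖·exp(2πi·g(θ)) for all θ ∈ ℝ (f has degree k on each circle of radius r centered at 0). Then fderiv ℝ f 0 = 0. -/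
/-!
Since `f 0 = 0` and `‖f‖` is radial, `‖L z‖ = lim ‖t⁻¹ • f (t • z)‖` depends only on `‖z‖`, where
`L = fderiv ℝ f 0`. Hence `L` is `c` times a rotation or a reflection, and on each circle it has
degree `±1`. If `c > 0`, then on a small circle of radius `r` we have `‖f - L‖ < c r = ‖L‖`, so
`f` and `L` are never antipodal there and must have the same degree, contradicting `|k| ≥ 2`.
-/

open Real Filter Topology
open scoped FourierTransform

section
variable {E F : Type*} [NormedAddCommGroup E] [NormedSpace ℝ E] [NormedAddCommGroup F]
  [NormedSpace ℝ F] {f : E → F} {L : E →L[ℝ] F}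

theorem HasFDerivAt.norm_apply_eq_of_norm_eq (hf : HasFDerivAt f L 0) (h0 : f 0 = 0)
    (hf_radial : ∀ z w : E, ‖z‖ = ‖w‖ → ‖f z‖ = ‖f w‖) {z w : E} (hzw : ‖z‖ = ‖w‖) :
    ‖L z‖ = ‖L w‖ := by
  have slope (v : E) : Tendsto (fun t : ℝ ↦ ‖t⁻¹ • f (t • v)‖) (𝓝[≠] 0) (𝓝 ‖L v‖) := by
    simpa [h0] using (hf.hasLineDerivAt v).tendsto_slope_zero.norm
  refine tendsto_nhds_unique (slope z) ((slope w).congr fun t ↦ ?_)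
  rw [norm_smul, norm_smul, hf_radial (t • w) (t • z) (by rw [norm_smul, norm_smul, hzw])]

theorem HasFDerivAt.exists_sphere_norm_sub_lt (hf : HasFDerivAt f L 0) (h0 : f 0 = 0)
    {ε : ℝ} (hε : 0 < ε) : ∃ r > 0, ∀ u : E, ‖u‖ = r → ‖f u - L u‖ < ε * r := by
  have hlo := (hasFDerivAt_iff_isLittleO_nhds_zero.mp hf).def (half_pos hε)
  obtain ⟨δ, hδ, hball⟩ := Metric.eventually_nhds_iff.mp hlo
  refine ⟨δ / 2, half_pos hδ, fun u hu ↦ ?_⟩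
  have := hball (y := u) (by rw [dist_zero_right, hu]; linarith)
  simp only [zero_add, h0, sub_zero, hu] at this
  linarith [mul_pos hε (half_pos hδ)]
end

theorem ContinuousLinearMap.norm_apply_eq_norm_one_mul {F : Type*} [NormedAddCommGroup F]
    [NormedSpace ℝ F] (L : ℂ →L[ℝ] F) (hL : ∀ z w : ℂ, ‖z‖ = ‖w‖ → ‖L z‖ = ‖L w‖) (z : ℂ) :
    ‖L z‖ = ‖L 1‖ * ‖z‖ := by
  rw [hL z ((‖z‖ : ℝ) • (1 : ℂ)) (by simp), L.map_smul, norm_smul, norm_norm, mul_comm]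

theorem Circle.exists_fourierChar_eq (a : Circle) : ∃ α : ℝ, 𝐞 α = a :=
  ⟨Complex.arg a / (2 * π), by
    rw [Real.fourierChar_apply', mul_div_cancel₀ _ (by positivity), Circle.exp_arg]⟩

theorem ContinuousLinearMap.exists_fourierChar_of_norm_apply_eq_mul (L : ℂ →L[ℝ] ℂ) {c : ℝ}
    (hc : 0 < c) (hL : ∀ z, ‖L z‖ = c * ‖z‖) :
    ∃ s : ℤ, |s| = 1 ∧ ∃ α : ℝ, ∀ θ, L (𝐞 θ) = c * 𝐞 (s * θ + α) := by
  let J : ℂ →ₗᵢ[ℝ] ℂ := ⟨(c⁻¹ • L : ℂ →L[ℝ] ℂ), fun z ↦ by simp [hL, abs_of_pos hc, hc.ne']⟩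
  have hLJ (z : ℂ) : L z = c * J.toLinearIsometryEquiv rfl z := by
    simp [J, Complex.real_smul, hc.ne']
  obtain ⟨a, ha | ha⟩ := linear_isometry_complex (J.toLinearIsometryEquiv rfl) <;>
    obtain ⟨α, rfl⟩ := a.exists_fourierChar_eq
  · refine ⟨1, rfl, α, fun θ ↦ ?_⟩
    simp only [hLJ, ha, _root_.rotation_apply, Int.cast_one, one_mul, AddChar.map_add_eq_mul]
    push_cast; ring
  · refine ⟨-1, rfl, α, fun θ ↦ ?_⟩
    simp only [hLJ, ha, LinearIsometryEquiv.trans_apply, _root_.rotation_apply,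
      Complex.conjLIE_apply, ← Circle.coe_inv_eq_conj, ← AddChar.map_neg_eq_inv, Int.cast_neg,
      Int.cast_one, neg_one_mul, AddChar.map_add_eq_mul]
    push_cast; ring

theorem coe_fourierChar_eq_exp (x : ℝ) :
    (𝐞 x : ℂ) = Complex.exp (2 * π * Complex.I * x) := by
  rw [Real.fourierChar_apply]; push_cast; ring_nf

theorem fourierChar_add_intCast_sub_half (n : ℤ) (x : ℝ) : (𝐞 (x + n - 1 / 2) : ℂ) = -𝐞 x := by
  have hn : 𝐞 n = 1 := by rw [Real.fourierChar_apply', Circle.exp_two_pi_mul_int]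
  have hhalf : (𝐞 (-(1 / 2)) : ℂ) = -1 := by
    rw [Real.fourierChar_apply]; push_cast; ring_nf; exact Complex.exp_neg_pi_mul_I
  rw [sub_eq_add_neg, AddChar.map_add_eq_mul, AddChar.map_add_eq_mul, hn]
  push_cast; rw [hhalf]; ring

theorem exists_eq_intCast_of_map_one_eq {φ : ℝ → ℝ} (hφ : Continuous φ) {d : ℤ} (hd : d ≠ 0)
    (h1 : φ 1 = φ 0 + d) : ∃ θ, ∃ n : ℤ, φ θ = n := by
  suffices ∃ n : ℤ, (n : ℝ) ∈ Set.uIcc (φ 0) (φ 1) by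
    obtain ⟨n, hn⟩ := this
    obtain ⟨θ, -, hθ⟩ := intermediate_value_uIcc hφ.continuousOn hn
    exact ⟨θ, n, hθ⟩
  rcases hd.lt_or_gt with hneg | hpos
  · have : (d : ℝ) ≤ -1 := by exact_mod_cast Int.le_sub_one_of_lt hneg
    refine ⟨⌊φ 0⌋, Set.mem_uIcc.mpr (Or.inr ⟨?_, Int.floor_le _⟩)⟩
    linarith [Int.sub_one_lt_floor (φ 0)]
  · have : (1 : ℝ) ≤ d := by exact_mod_cast hpos
    refine ⟨⌈φ 0⌉, Set.mem_uIcc.mpr (Or.inl ⟨Int.le_ceil _, ?_⟩)⟩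
    linarith [Int.ceil_lt_add_one (φ 0)]

/-- The hypothesis rules out `𝐞 (g θ) = -𝐞 (h θ)`; if the degrees differed, the intermediate value
theorem would produce such an antipodal `θ`. -/
theorem degree_eq_of_norm_sub_lt {g h : ℝ → ℝ} (hg : Continuous g) (hh : Continuous h)
    {k m : ℤ} (hg1 : g 1 = g 0 + k) (hh1 : h 1 = h 0 + m) {ρ R : ℝ} (hρ : 0 ≤ ρ)
    (hclose : ∀ θ, ‖(ρ * 𝐞 (g θ) - R * 𝐞 (h θ) : ℂ)‖ < R) : k = m := by
  by_contra hkm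
  obtain ⟨θ, n, hθ⟩ := exists_eq_intCast_of_map_one_eq (φ := fun θ ↦ g θ - h θ + 1 / 2)
    (by fun_prop) (sub_ne_zero.mpr hkm) (by push_cast; linarith)
  have hanti : (𝐞 (g θ) : ℂ) = -𝐞 (h θ) := by
    rw [← fourierChar_add_intCast_sub_half n]; congr 2; linarith
  have hdiff : (ρ * 𝐞 (g θ) - R * 𝐞 (h θ) : ℂ) = -((ρ + R : ℝ) * 𝐞 (h θ)) := by
    rw [hanti]; push_cast; ring
  have := hclose θ
  rw [hdiff, norm_neg, norm_mul, Circle.norm_coe, mul_one, Complex.norm_real,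
    Real.norm_eq_abs] at this
  linarith [le_abs_self (ρ + R)]

/-- If `f : ℂ → ℂ` is real-differentiable at `0`, fixes `0`, carries circles centered at `0`
into circles centered at `0`, and has degree `k` with `|k| ≥ 2` on each circle of radius
`r > 0`, then the derivative of `f` at `0` vanishes. -/
theorem fderiv_eq_zero_of_degree_ge_two (f : ℂ → ℂ) (hf : DifferentiableAt ℝ f 0)
    (h0 : f 0 = 0) (hcirc : ∀ z w : ℂ, ‖z‖ = ‖w‖ → ‖f z‖ = ‖f w‖)
    (k : ℤ) (hk : 2 ≤ |k|)
    (hdeg : ∀ r : ℝ, 0 < r → ∃ g : ℝ → ℝ, Continuous g ∧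
      (∀ θ : ℝ, g (θ + 1) = g θ + k) ∧
      (∀ θ : ℝ, f ((r : ℂ) * Complex.exp (2 * (π : ℂ) * Complex.I * (θ : ℂ)))
        = (‖f (r : ℂ)‖ : ℂ) * Complex.exp (2 * (π : ℂ) * Complex.I * (g θ : ℂ)))) :
    fderiv ℝ f 0 = 0 := by
  set L := fderiv ℝ f 0
  have hL : HasFDerivAt f L 0 := hf.hasFDerivAt
  have hnorm := L.norm_apply_eq_norm_one_mul fun z w ↦ hL.norm_apply_eq_of_norm_eq h0 hcirc
  by_contra hL0
  have hc : 0 < ‖L 1‖ := by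
    refine (norm_nonneg _).lt_of_ne' fun h ↦ hL0 (ContinuousLinearMap.ext fun z ↦ ?_)
    simpa [h] using hnorm z
  obtain ⟨s, hs, α, hLe⟩ := L.exists_fourierChar_of_norm_apply_eq_mul hc hnorm
  obtain ⟨r, hr, hclose⟩ := hL.exists_sphere_norm_sub_lt h0 hc
  obtain ⟨g, hgc, hgp, hgf⟩ := hdeg r hr
  simp only [← coe_fourierChar_eq_exp] at hgf
  have hks : k = s := by
    refine degree_eq_of_norm_sub_lt (h := fun θ ↦ s * θ + α) (R := ‖L 1‖ * r) hgc (by fun_prop)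
      (by simpa using hgp 0) (by ring) (norm_nonneg (f r)) fun θ ↦ ?_
    have hLr : L (r * 𝐞 θ) = ((‖L 1‖ * r : ℝ) : ℂ) * 𝐞 (s * θ + α) := by
      rw [← Complex.real_smul, L.map_smul, hLe, Complex.real_smul]; push_cast; ring
    simpa only [hgf, hLr] using hclose (r * 𝐞 θ) (by simp [abs_of_pos hr, Circle.norm_coe])
  rw [hks, hs] at hk
  exact absurd hk (by norm_num)
end

section
/- Let m be an integer with m ≠ 1 and let g : ℝ → ℝ be continuous with g(x+1) = g(x) + m for all x ∈ ℝ. Then there exist at least |m − 1| distinct points x ∈ [0,1) such that g(x) − x is an integer. (A continuous degree-m circle map has at least |m − 1| fixed points.) -/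
/-!
Put `f x = g x - x`. Then `f 1 = f 0 + (m - 1)`, so as `x` runs over `[0, 1]` the continuous
function `f` (or `-f`, when `m < 1`) sweeps the half-open interval from `f 0` to `f 1`, which
contains exactly `|m - 1|` integers; by the intermediate value theorem each of them is attained
on `[0, 1)`, necessarily at distinct points.
-/

open Set

section IntegerValues

variable {α : Type*} [ConditionallyCompleteLinearOrder α] [TopologicalSpace α] [OrderTopology α]
  [DenselyOrdered α] {a b : α} {f : α → ℝ}

theorem exists_finset_Ico_intCast_values_of_continuousOn (hab : a ≤ b)
    (hf : ContinuousOn f (Icc a b)) :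
    ∃ s : Finset α, (⌈f b⌉ - ⌈f a⌉).toNat ≤ s.card ∧ ↑s ⊆ Ico a b ∧
      ∀ x ∈ s, ∃ j : ℤ, f x = j := by
  have attained : ∀ k ∈ Finset.Ico ⌈f a⌉ ⌈f b⌉, ∃ x ∈ Ico a b, f x = k := fun k hk => by
    rw [Finset.mem_Ico, Int.ceil_le, Int.lt_ceil] at hk
    exact intermediate_value_Ico hab hf hk
  choose! x hx hfx using attained
  classical
  refine ⟨(Finset.Ico ⌈f a⌉ ⌈f b⌉).image x, ?_, ?_, ?_⟩
  · rw [Finset.card_image_of_injOn, Int.card_Ico]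
    intro k hk l hl hkl
    exact_mod_cast (hfx k hk).symm.trans ((congrArg f hkl).trans (hfx l hl))
  · intro y hy
    obtain ⟨k, hk, rfl⟩ := Finset.mem_image.mp hy
    exact hx k hk
  · simpa only [Finset.mem_image, forall_exists_index, and_imp, forall_apply_eq_imp_iff₂]
      using fun k hk => ⟨k, hfx k hk⟩

theorem exists_finset_Ico_intCast_values_of_eq_add_intCast (hab : a ≤ b)
    (hf : ContinuousOn f (Icc a b)) {d : ℤ} (hd : f b = f a + d) :
    ∃ s : Finset α, d.natAbs ≤ s.card ∧ ↑s ⊆ Ico a b ∧ ∀ x ∈ s, ∃ j : ℤ, f x = j := by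
  rcases le_total 0 d with hd₀ | hd₀
  · obtain ⟨s, hcard, hs, hint⟩ := exists_finset_Ico_intCast_values_of_continuousOn hab hf
    have hceil : ⌈f b⌉ - ⌈f a⌉ = d := by rw [hd, Int.ceil_add_intCast]; ring
    exact ⟨s, by omega, hs, hint⟩
  · obtain ⟨s, hcard, hs, hint⟩ :=
      exists_finset_Ico_intCast_values_of_continuousOn (f := -f) hab hf.neg
    have hceil : ⌈(-f) b⌉ - ⌈(-f) a⌉ = -d := by
      rw [Pi.neg_apply, Pi.neg_apply, hd, neg_add, ← Int.cast_neg, Int.ceil_add_intCast]; ring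
    refine ⟨s, by omega, hs, fun x hx => ?_⟩
    obtain ⟨j, hj⟩ := hint x hx
    exact ⟨-j, by rw [Int.cast_neg, ← hj, Pi.neg_apply, neg_neg]⟩

end IntegerValues

theorem circle_map_fixed_points_general (m : ℤ) (g : ℝ → ℝ) (hg : Continuous g)
    (hlift : ∀ x : ℝ, g (x + 1) = g x + m) :
    ∃ s : Finset ℝ, (m - 1).natAbs ≤ s.card ∧ ↑s ⊆ Ico (0 : ℝ) 1 ∧
      ∀ x ∈ s, ∃ j : ℤ, g x - x = j := by
  have hdisplacement : g 1 - 1 = (g 0 - 0) + ((m - 1 : ℤ) : ℝ) := by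
    have h := hlift 0
    rw [zero_add] at h
    push_cast
    linarith
  exact exists_finset_Ico_intCast_values_of_eq_add_intCast (f := fun x => g x - x) zero_le_one
    (hg.sub continuous_id).continuousOn hdisplacement

/-- A continuous degree-`m` circle map with `m ≠ 1` has at least `|m - 1|` fixed points:
if `g` is a lift, there are at least `|m - 1|` points `x ∈ [0,1)` with `g x - x ∈ ℤ`. -/
theorem circle_map_fixed_points (m : ℤ) (hm : m ≠ 1) (g : ℝ → ℝ) (hg : Continuous g)
    (hlift : ∀ x : ℝ, g (x + 1) = g x + m) :
    ∃ s : Finset ℝ, (m - 1).natAbs ≤ s.card ∧ ↑s ⊆ Ico (0 : ℝ) 1 ∧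
      ∀ x ∈ s, ∃ j : ℤ, g x - x = j :=
  circle_map_fixed_points_general m g hg hlift
end

section
/- Let φ : ℝ → ℝ be continuous with φ([0,1]) ⊆ [0,1] and φ(0), φ(1) ∈ {0,1}. Suppose the directed intervals of φ are precisely (a₁,b₁), …, (a_N,b_N) with b_i ≤ a_{i+1} for all i (N ≥ 0). Let σ : {1,…,N} → ℤ satisfy |σᵢ| ≤ 1 for every i. Define εᵢ = 1 if φ(aᵢ) = 0 and φ(bᵢ) = 1 (ascending), and εᵢ = −1 if φ(aᵢ) = 1 and φ(bᵢ) = 0 (descending); define D = Σᵢ εᵢ·σᵢ; define p = (1 if φ(0) = 0, else 0) + (1 if φ(1) = 1, else 0); define Z = the number of indices i with σᵢ = 0 for which there exists h ∈ (aᵢ,bᵢ) with φ(h) = h; and define R = the number of indices i with σᵢ = −1 for which there exists h ∈ (aᵢ,bᵢ) with φ(h) = h. Then p + Z + 2R > D. -/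
open Set

/-- `(a,b)` is a directed interval of `φ`: `0 ≤ a < b ≤ 1`, the values `φ a`, `φ b` lie
in `{0,1}` and differ, and `φ` maps `(a,b)` into `(0,1)`. -/
def IsDirectedInterval (φ : ℝ → ℝ) (a b : ℝ) : Prop :=
  0 ≤ a ∧ a < b ∧ b ≤ 1 ∧ φ a ∈ ({0, 1} : Set ℝ) ∧ φ b ∈ ({0, 1} : Set ℝ) ∧
    φ a ≠ φ b ∧ ∀ x ∈ Ioo a b, φ x ∈ Ioo (0 : ℝ) 1

/-- Every descending directed interval contains a fixed point. -/
lemma desc_fixed {φ : ℝ → ℝ} (hφ : Continuous φ) {a b : ℝ}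
    (h : IsDirectedInterval φ a b) (ha : φ a = 1) :
    ∃ x ∈ Ioo a b, φ x = x := by
  obtain ⟨h0, hab, hb1, hfa, hfb, hne, _⟩ := h
  have hfb0 : φ b = 0 := by
    rcases hfb with h | h
    · exact h
    · rw [ha, h] at hne; exact absurd rfl hne
  have hcont : ContinuousOn (fun x => φ x - x) (Icc a b) :=
    (hφ.sub continuous_id).continuousOn
  have hmem : (0 : ℝ) ∈ Ioo (φ b - b) (φ a - a) := by
    constructor
    · rw [hfb0]; linarith
    · rw [ha]; linarith
  obtain ⟨x, hx, hx0⟩ := intermediate_value_Ioo' hab.le hcont hmem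
  exact ⟨x, hx, by simp at hx0; linarith⟩

/-- If `φ` takes distinct values of `{0,1}` at `u < v`, a directed interval lies inside. -/
lemma gap_di {φ : ℝ → ℝ} (hφ : Continuous φ)
    (hmaps : MapsTo φ (Icc (0 : ℝ) 1) (Icc (0 : ℝ) 1)) {u v : ℝ}
    (hu : 0 ≤ u) (huv : u < v) (hv : v ≤ 1)
    (hu' : φ u ∈ ({0, 1} : Set ℝ)) (hv' : φ v ∈ ({0, 1} : Set ℝ)) (hne : φ u ≠ φ v) :
    ∃ x y, u ≤ x ∧ y ≤ v ∧ IsDirectedInterval φ x y := by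
  set S : Set ℝ := Icc u v ∩ φ ⁻¹' {φ v} with hS
  have hSc : IsClosed S := isClosed_Icc.inter (isClosed_singleton.preimage hφ)
  have hSne : S.Nonempty := ⟨v, ⟨huv.le, le_rfl⟩, rfl⟩
  have hSbdd : BddBelow S := ⟨u, fun t ht => ht.1.1⟩
  set y := sInf S with hy
  have hyS : y ∈ S := hSc.csInf_mem hSne hSbdd
  have hyIcc : y ∈ Icc u v := hyS.1
  have hφy : φ y = φ v := hyS.2
  have huy : u < y := lt_of_le_of_ne hyIcc.1 (by
    intro h; exact hne (by rw [h, hφy]))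
  set T : Set ℝ := Icc u y ∩ φ ⁻¹' {φ u} with hT
  have hTc : IsClosed T := isClosed_Icc.inter (isClosed_singleton.preimage hφ)
  have hTne : T.Nonempty := ⟨u, ⟨le_rfl, huy.le⟩, rfl⟩
  have hTbdd : BddAbove T := ⟨y, fun t ht => ht.1.2⟩
  set x := sSup T with hx
  have hxT : x ∈ T := hTc.csSup_mem hTne hTbdd
  have hxIcc : x ∈ Icc u y := hxT.1
  have hφx : φ x = φ u := hxT.2
  have hxy : x < y := lt_of_le_of_ne hxIcc.2 (by
    intro h; exact hne (by rw [← hφx, h, hφy]))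
  have hmid : ∀ z ∈ Ioo x y, φ z ∈ Ioo (0 : ℝ) 1 := by
    intro z hz
    have hz01 : z ∈ Icc (0 : ℝ) 1 := by
      constructor
      · linarith [hxIcc.1, hz.1]
      · linarith [hyIcc.2, hz.2]
    have hφz : φ z ∈ Icc (0 : ℝ) 1 := hmaps hz01
    have hzu : φ z ≠ φ u := by
      intro h
      have : z ∈ T := ⟨⟨le_trans hxIcc.1 hz.1.le, hz.2.le⟩, h⟩
      exact absurd (le_csSup hTbdd this) (not_le.mpr hz.1)
    have hzv : φ z ≠ φ v := by
      intro h
      have : z ∈ S := ⟨⟨le_trans hxIcc.1 hz.1.le,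
        le_trans hz.2.le hyIcc.2⟩, h⟩
      exact absurd (csInf_le hSbdd this) (not_le.mpr hz.2)
    have hz0 : φ z ≠ 0 := by
      rcases hu' with h | h
      · rw [← h]; exact hzu
      · rcases hv' with h' | h'
        · rw [← h']; exact hzv
        · rw [h, h'] at hne; exact absurd rfl hne
    have hz1 : φ z ≠ 1 := by
      rcases hu' with h | h
      · rcases hv' with h' | h'
        · rw [h, h'] at hne; exact absurd rfl hne
        · rw [← h']; exact hzv
      · rw [← h]; exact hzu
    exact ⟨lt_of_le_of_ne hφz.1 (Ne.symm hz0), lt_of_le_of_ne hφz.2 hz1⟩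
  refine ⟨x, y, hxIcc.1, hyIcc.2, ?_⟩
  refine ⟨le_trans hu hxIcc.1, hxy, le_trans hyIcc.2 hv, ?_, ?_, ?_, hmid⟩
  · rw [hφx]; exact hu'
  · rw [hφy]; exact hv'
  · rw [hφx, hφy]; exact hne

/-- Counting fixed points: if all latitude degrees `σ i` satisfy `|σ i| ≤ 1`, then the number
of fixed poles plus the fixed points of `φ` in zero-degree bands plus twice the fixed points
of `φ` in degree `-1` bands exceeds the global degree `D = Σ εᵢ σᵢ`. -/
theorem count_fixed_points (φ : ℝ → ℝ) (hφ : Continuous φ)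
    (hmaps : MapsTo φ (Icc (0 : ℝ) 1) (Icc (0 : ℝ) 1))
    (h0 : φ 0 ∈ ({0, 1} : Set ℝ)) (h1 : φ 1 ∈ ({0, 1} : Set ℝ))
    (N : ℕ) (a b : Fin N → ℝ)
    (hdir : ∀ i, IsDirectedInterval φ (a i) (b i))
    (hall : ∀ x y : ℝ, IsDirectedInterval φ x y → ∃ i, a i = x ∧ b i = y)
    (horder : ∀ i j : Fin N, (i : ℕ) + 1 = (j : ℕ) → b i ≤ a j)
    (σ : Fin N → ℤ) (hσ : ∀ i, |σ i| ≤ 1) :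
    ((if φ 0 = 0 then 1 else 0) + (if φ 1 = 1 then 1 else 0)
      + ({i : Fin N | σ i = 0 ∧ ∃ h ∈ Ioo (a i) (b i), φ h = h}.ncard : ℤ)
      + 2 * ({i : Fin N | σ i = -1 ∧ ∃ h ∈ Ioo (a i) (b i), φ h = h}.ncard : ℤ))
    > ∑ i : Fin N, (if φ (a i) = 0 then 1 else -1) * σ i := by
  classical
  have hab : ∀ i : Fin N, a i < b i := fun i => (hdir i).2.1
  have ha0 : ∀ i : Fin N, 0 ≤ a i := fun i => (hdir i).1
  have hb1 : ∀ i : Fin N, b i ≤ 1 := fun i => (hdir i).2.2.1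
  -- ordering of all intervals
  have key : ∀ n : ℕ, ∀ i j : Fin N, (j : ℕ) = (i : ℕ) + n + 1 → b i ≤ a j := by
    intro n
    induction n with
    | zero => intro i j h; exact horder i j (by omega)
    | succ n ih =>
      intro i j h
      have hk : (i : ℕ) + n + 1 < N := by have := j.2; omega
      calc b i ≤ a ⟨(i : ℕ) + n + 1, hk⟩ := ih i _ rfl
        _ ≤ b ⟨(i : ℕ) + n + 1, hk⟩ := (hab _).le
        _ ≤ a j := horder _ j (by simp; omega)
  have hle : ∀ i j : Fin N, (i : ℕ) < (j : ℕ) → b i ≤ a j :=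
    fun i j h => key ((j : ℕ) - (i : ℕ) - 1) i j (by omega)
  have hmono : ∀ i j : Fin N, (i : ℕ) ≤ (j : ℕ) → a i ≤ a j := by
    intro i j h
    rcases eq_or_lt_of_le h with h' | h'
    · have : i = j := Fin.ext h'
      rw [this]
    · exact le_trans (hab i).le (hle i j h')
  have hmono' : ∀ i j : Fin N, (i : ℕ) ≤ (j : ℕ) → b i ≤ b j := by
    intro i j h
    rcases eq_or_lt_of_le h with h' | h'
    · have : i = j := Fin.ext h'
      rw [this]
    · exact le_trans (hle i j h') (hab j).le
  -- gap contradiction machine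
  have gapc : ∀ u v : ℝ, 0 ≤ u → u < v → v ≤ 1 →
      φ u ∈ ({0, 1} : Set ℝ) → φ v ∈ ({0, 1} : Set ℝ) → φ u ≠ φ v →
      (∀ k : Fin N, ¬(u ≤ a k ∧ b k ≤ v)) → False := by
    intro u v hu huv hv hu' hv' hne hnot
    obtain ⟨x, y, hux, hyv, hdi⟩ := gap_di hφ hmaps hu huv hv hu' hv' hne
    obtain ⟨k, hk1, hk2⟩ := hall x y hdi
    exact hnot k ⟨hk1 ▸ hux, hk2 ▸ hyv⟩
  -- gap equalities
  have hN0 : N = 0 → φ 0 = φ 1 := by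
    intro hN
    by_contra hne
    refine gapc 0 1 le_rfl one_pos le_rfl h0 h1 hne (fun k => ?_)
    exact absurd k.2 (by omega)
  have hfirst : ∀ (h : 0 < N), φ 0 = φ (a ⟨0, h⟩) := by
    intro h
    rcases eq_or_lt_of_le (ha0 ⟨0, h⟩) with h' | h'
    · rw [← h']
    · by_contra hne
      refine gapc 0 (a ⟨0, h⟩) le_rfl h' (le_trans (hab _).le (hb1 _)) h0
        (hdir _).2.2.2.1 hne (fun k => ?_)
      rintro ⟨_, hk2⟩
      have : a ⟨0, h⟩ ≤ a k := hmono _ k (Nat.zero_le _)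
      linarith [hab k]
  have hadj : ∀ i j : Fin N, (i : ℕ) + 1 = (j : ℕ) → φ (b i) = φ (a j) := by
    intro i j hij
    rcases eq_or_lt_of_le (horder i j hij) with h' | h'
    · rw [h']
    · by_contra hne
      refine gapc (b i) (a j) (le_trans (ha0 i) (hab i).le) h'
        (le_trans (hab j).le (hb1 j)) (hdir i).2.2.2.2.1 (hdir j).2.2.2.1 hne
        (fun k => ?_)
      rintro ⟨hk1, hk2⟩
      rcases le_or_gt (k : ℕ) (i : ℕ) with hk | hk
      · have : a k ≤ a i := hmono k i hk
        linarith [hab i, hab k]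
      · have : (j : ℕ) ≤ (k : ℕ) := by omega
        have : a j ≤ a k := hmono j k this
        linarith [hab k]
  have hlast : ∀ (h : 0 < N), φ (b ⟨N - 1, by omega⟩) = φ 1 := by
    intro h
    rcases eq_or_lt_of_le (hb1 ⟨N - 1, by omega⟩) with h' | h'
    · rw [h']
    · by_contra hne
      refine gapc (b ⟨N - 1, by omega⟩) 1 (le_trans (ha0 _) (hab _).le) h' le_rfl
        (hdir _).2.2.2.2.1 h1 hne (fun k => ?_)
      rintro ⟨hk1, hk2⟩
      have : b k ≤ b ⟨N - 1, by omega⟩ := hmono' k _ (by have := k.2; simp; omega)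
      linarith [hab k]
  -- the step function g and telescoping
  set g : ℝ → ℤ := fun t => if t = 0 then 0 else 1 with hg
  set f : ℕ → ℤ := fun k => if hk : k < N then g (φ (a ⟨k, hk⟩)) else g (φ 1) with hf
  have hf0 : f 0 = g (φ 0) := by
    rcases Nat.eq_zero_or_pos N with hN | hN
    · simp only [hf]
      rw [dif_neg (by omega), hN0 hN]
    · simp only [hf]
      rw [dif_pos hN, ← hfirst hN]
  have hfN : f N = g (φ 1) := by simp only [hf]; rw [dif_neg (lt_irrefl N)]
  have hstep : ∀ (k : ℕ) (hk : k < N),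
      f (k + 1) = g (φ (b ⟨k, hk⟩)) ∧ f k = g (φ (a ⟨k, hk⟩)) := by
    intro k hk
    constructor
    · simp only [hf]
      rcases lt_or_ge (k + 1) N with hk1 | hk1
      · rw [dif_pos hk1, ← hadj ⟨k, hk⟩ ⟨k + 1, hk1⟩ rfl]
      · have hN : k + 1 = N := by omega
        rw [dif_neg (by omega)]
        have : (⟨N - 1, by omega⟩ : Fin N) = ⟨k, hk⟩ := Fin.ext (by simp; omega)
        rw [← hlast (by omega), this]
    · simp only [hf]; rw [dif_pos hk]
  -- values at endpoints
  have hend : ∀ i : Fin N, (φ (a i) = 0 ∧ φ (b i) = 1) ∨ (φ (a i) = 1 ∧ φ (b i) = 0) := by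
    intro i
    obtain ⟨_, _, _, hfa, hfb, hne, _⟩ := hdir i
    rcases hfa with h | h <;> rcases hfb with h' | h'
    · rw [h, h'] at hne; exact absurd rfl hne
    · exact Or.inl ⟨h, h'⟩
    · exact Or.inr ⟨h, h'⟩
    · rw [h, h'] at hne; exact absurd rfl hne
  -- telescoping sum of ε
  have hsum : ∑ i : Fin N, (if φ (a i) = 0 then (1 : ℤ) else -1) = g (φ 1) - g (φ 0) := by
    have heq : ∀ i : Fin N, (if φ (a i) = 0 then (1 : ℤ) else -1)
        = f ((i : ℕ) + 1) - f (i : ℕ) := by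
      intro i
      obtain ⟨h1', h2'⟩ := hstep (i : ℕ) i.2
      have hi : (⟨(i : ℕ), i.2⟩ : Fin N) = i := Fin.ext rfl
      rw [hi] at h1' h2'
      rw [h1', h2']
      rcases hend i with ⟨ha, hb⟩ | ⟨ha, hb⟩
      · rw [if_pos ha, hg]; simp [ha, hb]
      · rw [if_neg (by rw [ha]; norm_num), hg]; simp [ha, hb]
    rw [Finset.sum_congr rfl (fun i _ => heq i)]
    rw [Fin.sum_univ_eq_sum_range (fun k => f (k + 1) - f k)]
    rw [Finset.sum_range_sub f N, hf0, hfN]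
  -- p in terms of g
  have hp : (if φ 0 = 0 then (1 : ℤ) else 0) + (if φ 1 = 1 then 1 else 0)
      = 1 - g (φ 0) + g (φ 1) := by
    simp only [Set.mem_insert_iff, Set.mem_singleton_iff] at h0 h1
    rcases h0 with h | h <;> rcases h1 with h' | h' <;> simp [hg, h, h']
  -- ncard to sums
  have hZ : ({i : Fin N | σ i = 0 ∧ ∃ h ∈ Ioo (a i) (b i), φ h = h}.ncard : ℤ)
      = ∑ i : Fin N, (if σ i = 0 ∧ ∃ h ∈ Ioo (a i) (b i), φ h = h then (1 : ℤ) else 0) := by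
    rw [Set.ncard_eq_toFinset_card', Set.toFinset_setOf, Finset.card_filter, Nat.cast_sum]
    exact Finset.sum_congr rfl fun i _ => by split_ifs <;> simp
  have hR : ({i : Fin N | σ i = -1 ∧ ∃ h ∈ Ioo (a i) (b i), φ h = h}.ncard : ℤ)
      = ∑ i : Fin N, (if σ i = -1 ∧ ∃ h ∈ Ioo (a i) (b i), φ h = h then (1 : ℤ) else 0) := by
    rw [Set.ncard_eq_toFinset_card', Set.toFinset_setOf, Finset.card_filter, Nat.cast_sum]
    exact Finset.sum_congr rfl fun i _ => by split_ifs <;> simp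
  -- per-band inequality
  have band : ∀ i : Fin N,
      (if φ (a i) = 0 then (1 : ℤ) else -1) * σ i ≤
      (if φ (a i) = 0 then (1 : ℤ) else -1)
        + (if σ i = 0 ∧ ∃ h ∈ Ioo (a i) (b i), φ h = h then (1 : ℤ) else 0)
        + 2 * (if σ i = -1 ∧ ∃ h ∈ Ioo (a i) (b i), φ h = h then (1 : ℤ) else 0) := by
    intro i
    have hσi : σ i = -1 ∨ σ i = 0 ∨ σ i = 1 := by have := abs_le.mp (hσ i); omega
    rcases hend i with ⟨ha, _⟩ | ⟨ha, _⟩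
    · rw [if_pos ha, one_mul]
      have t1 : (0 : ℤ) ≤ if σ i = 0 ∧ ∃ h ∈ Ioo (a i) (b i), φ h = h then 1 else 0 := by
        split_ifs <;> norm_num
      have t2 : (0 : ℤ) ≤ if σ i = -1 ∧ ∃ h ∈ Ioo (a i) (b i), φ h = h then 1 else 0 := by
        split_ifs <;> norm_num
      have hσ1 : σ i ≤ 1 := by have := abs_le.mp (hσ i); omega
      linarith
    · rw [if_neg (by rw [ha]; norm_num)]
      obtain ⟨x, hx, hfx⟩ := desc_fixed hφ (hdir i) ha
      rcases hσi with h | h | h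
      · rw [if_neg (by simp [h]), if_pos ⟨h, x, hx, hfx⟩, h]; norm_num
      · rw [if_pos ⟨h, x, hx, hfx⟩, if_neg (by simp [h]), h]; norm_num
      · rw [if_neg (by simp [h]), if_neg (by simp [h]), h]; norm_num
  have hsumle : ∑ i : Fin N, (if φ (a i) = 0 then (1 : ℤ) else -1) * σ i ≤
      ∑ i : Fin N, ((if φ (a i) = 0 then (1 : ℤ) else -1)
        + (if σ i = 0 ∧ ∃ h ∈ Ioo (a i) (b i), φ h = h then (1 : ℤ) else 0)
        + 2 * (if σ i = -1 ∧ ∃ h ∈ Ioo (a i) (b i), φ h = h then (1 : ℤ) else 0)) :=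
    Finset.sum_le_sum (fun i _ => band i)
  rw [Finset.sum_add_distrib, Finset.sum_add_distrib, ← Finset.mul_sum] at hsumle
  rw [hZ, hR, hp]
  rw [hsum] at hsumle
  linarith
end

section
/- Let φ : ℝ → ℝ be continuous with φ([0,1]) ⊆ [0,1] and φ(0), φ(1) ∈ {0,1}. Suppose the directed intervals of φ are precisely (a₁,b₁), …, (a_N,b_N) with b_i ≤ a_{i+1} for all i, and N ≥ 1. Then φ(a₁) = φ(0), φ(b_N) = φ(1), and φ(a_{i+1}) = φ(b_i) for every 1 ≤ i ≤ N−1. In particular consecutive directed intervals alternate between ascending and descending. -/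
open Set

/-!
If `φ` takes different values `0` and `1` at the ends of a subinterval `[u, v]` of `[0, 1]`,
then the first point `y ≥ u` where `φ` takes the value `φ v`, and the last point `x ≤ y` where
it takes the value `φ u`, bound a directed interval inside `[u, v]`. In the situation of the
theorem every directed interval is one of the `(aᵢ, bᵢ)`, and no `(aᵢ, bᵢ)` fits in `[0, a₁]`,
in `[b_N, 1]` or in a gap `[bᵢ, aᵢ₊₁]`, so the values of `φ` at the two ends of each of these
intervals agree.
-/

lemma Fin.monotone_of_le_of_val_add_one_eq {α : Type*} [Preorder α] {N : ℕ} {f : Fin N → α}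
    (h : ∀ i j : Fin N, (i : ℕ) + 1 = j → f i ≤ f j) : Monotone f := by
  cases N with
  | zero => exact fun i => i.elim0
  | succ n => exact Fin.monotone_iff_le_succ.2 fun i => h _ _ (by simp)

section FirstLastHit

variable {α β : Type*} [ConditionallyCompleteLinearOrder α] [TopologicalSpace α]
  [OrderTopology α] [TopologicalSpace β] [T1Space β] {f : α → β} {u v : α}

lemma ContinuousOn.isCompact_Icc_inter_preimage (hf : ContinuousOn f (Icc u v)) (c : β) :
    IsCompact (Icc u v ∩ f ⁻¹' {c}) :=
  isCompact_Icc.of_isClosed_subset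
    (hf.preimage_isClosed_of_isClosed isClosed_Icc isClosed_singleton) inter_subset_left

lemma ContinuousOn.exists_first_eq_right (hf : ContinuousOn f (Icc u v)) (huv : u ≤ v) :
    ∃ y ∈ Icc u v, f y = f v ∧ ∀ z ∈ Ico u y, f z ≠ f v := by
  obtain ⟨y, ⟨hy, hfy⟩, hleast⟩ :=
    (hf.isCompact_Icc_inter_preimage (f v)).exists_isLeast ⟨v, ⟨huv, le_rfl⟩, rfl⟩
  refine ⟨y, hy, hfy, fun z hz hfz => ?_⟩
  exact (hleast ⟨⟨hz.1, hz.2.le.trans hy.2⟩, hfz⟩).not_gt hz.2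

lemma ContinuousOn.exists_last_eq_left (hf : ContinuousOn f (Icc u v)) (huv : u ≤ v) :
    ∃ x ∈ Icc u v, f x = f u ∧ ∀ z ∈ Ioc x v, f z ≠ f u := by
  obtain ⟨x, ⟨hx, hfx⟩, hgreatest⟩ :=
    (hf.isCompact_Icc_inter_preimage (f u)).exists_isGreatest ⟨u, ⟨le_rfl, huv⟩, rfl⟩
  refine ⟨x, hx, hfx, fun z hz hfz => ?_⟩
  exact (hgreatest ⟨⟨hx.1.trans hz.1.le, hz.2⟩, hfz⟩).not_gt hz.1

lemma ContinuousOn.exists_Ioo_forall_ne (hf : ContinuousOn f (Icc u v)) (huv : u ≤ v)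
    (hne : f u ≠ f v) :
    ∃ x y, u ≤ x ∧ x < y ∧ y ≤ v ∧ f x = f u ∧ f y = f v ∧
      ∀ z ∈ Ioo x y, f z ≠ f u ∧ f z ≠ f v := by
  obtain ⟨y, hy, hfy, hfirst⟩ := hf.exists_first_eq_right huv
  obtain ⟨x, hx, hfx, hlast⟩ :=
    (hf.mono (Icc_subset_Icc_right hy.2)).exists_last_eq_left hy.1
  have hxy : x < y := hx.2.lt_of_ne fun h => hne (by rw [← hfx, h, hfy])
  exact ⟨x, y, hx.1, hxy, hy.2, hfx, hfy, fun z hz =>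
    ⟨hlast z ⟨hz.1, hz.2.le⟩, hfirst z ⟨hx.1.trans hz.1.le, hz.2⟩⟩⟩

end FirstLastHit

lemma mem_Ioo_of_mem_Icc_of_ne_of_ne {p q t : ℝ} (hp : p ∈ ({0, 1} : Set ℝ))
    (hq : q ∈ ({0, 1} : Set ℝ)) (hpq : p ≠ q) (ht : t ∈ Icc (0 : ℝ) 1) (htp : t ≠ p)
    (htq : t ≠ q) : t ∈ Ioo (0 : ℝ) 1 := by
  have h01 : t ≠ 0 ∧ t ≠ 1 := by
    rcases hp with rfl | rfl <;> rcases hq with rfl | rfl <;> simp_all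
  exact ⟨ht.1.lt_of_ne (Ne.symm h01.1), ht.2.lt_of_ne h01.2⟩

namespace IsDirectedInterval

variable {φ : ℝ → ℝ} {x y : ℝ}

lemma exists_of_ne {u v : ℝ} (hφ : ContinuousOn φ (Icc u v))
    (hmaps : MapsTo φ (Icc u v) (Icc 0 1)) (hu0 : 0 ≤ u) (huv : u ≤ v) (hv1 : v ≤ 1)
    (hu : φ u ∈ ({0, 1} : Set ℝ)) (hv : φ v ∈ ({0, 1} : Set ℝ)) (hne : φ u ≠ φ v) :
    ∃ x y, IsDirectedInterval φ x y ∧ u ≤ x ∧ y ≤ v := by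
  obtain ⟨x, y, hux, hxy, hyv, hfx, hfy, hmid⟩ := hφ.exists_Ioo_forall_ne huv hne
  refine ⟨x, y, ⟨hu0.trans hux, hxy, hyv.trans hv1, hfx ▸ hu, hfy ▸ hv, hfx ▸ hfy ▸ hne,
    fun z hz => ?_⟩, hux, hyv⟩
  exact mem_Ioo_of_mem_Icc_of_ne_of_ne hu hv hne
    (hmaps ⟨hux.trans hz.1.le, hz.2.le.trans hyv⟩) (hmid z hz).1 (hmid z hz).2

variable (h : IsDirectedInterval φ x y)
include h

lemma lt : x < y := h.2.1

lemma left_nonneg : 0 ≤ x := h.1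

lemma right_le_one : y ≤ 1 := h.2.2.1

lemma right_nonneg : 0 ≤ y := h.left_nonneg.trans h.lt.le

lemma left_le_one : x ≤ 1 := h.lt.le.trans h.right_le_one

lemma left_mem : φ x ∈ ({0, 1} : Set ℝ) := h.2.2.2.1

lemma right_mem : φ y ∈ ({0, 1} : Set ℝ) := h.2.2.2.2.1

lemma ascending_iff : φ x = 0 ∧ φ y = 1 ↔ φ y = 1 := by
  obtain ⟨-, -, -, hx, hy, hne, -⟩ := h
  rcases hx with hx | hx <;> rcases hy with hy | hy <;> simp_all

lemma descending_iff : φ x = 1 ∧ φ y = 0 ↔ φ x = 1 := by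
  obtain ⟨-, -, -, hx, hy, hne, -⟩ := h
  rcases hx with hx | hx <;> rcases hy with hy | hy <;> simp_all

end IsDirectedInterval

lemma eq_of_forall_not_subset {φ : ℝ → ℝ} (hφ : ContinuousOn φ (Icc 0 1))
    (hmaps : MapsTo φ (Icc (0 : ℝ) 1) (Icc (0 : ℝ) 1)) {N : ℕ} {a b : Fin N → ℝ}
    (hall : ∀ x y : ℝ, IsDirectedInterval φ x y → ∃ i, a i = x ∧ b i = y) (u v : ℝ)
    (hu0 : 0 ≤ u) (huv : u ≤ v) (hv1 : v ≤ 1) (hu : φ u ∈ ({0, 1} : Set ℝ))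
    (hv : φ v ∈ ({0, 1} : Set ℝ)) (hgap : ∀ k, u ≤ a k → b k ≤ v → False) : φ u = φ v := by
  by_contra hne
  have hsub : Icc u v ⊆ Icc 0 1 := Icc_subset_Icc hu0 hv1
  obtain ⟨x, y, hxy, hux, hyv⟩ := IsDirectedInterval.exists_of_ne (hφ.mono hsub)
    (hmaps.mono_left hsub) hu0 huv hv1 hu hv hne
  obtain ⟨k, rfl, rfl⟩ := hall x y hxy
  exact hgap k hux hyv

/-- The value of `φ` at the left end of the first directed interval is `φ 0`, at the right
end of the last one is `φ 1`, and consecutive directed intervals share endpoint values;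
in particular consecutive directed intervals alternate between ascending and descending. -/
theorem directed_intervals_alternate (φ : ℝ → ℝ) (hφ : Continuous φ)
    (hmaps : MapsTo φ (Icc (0 : ℝ) 1) (Icc (0 : ℝ) 1))
    (h0 : φ 0 ∈ ({0, 1} : Set ℝ)) (h1 : φ 1 ∈ ({0, 1} : Set ℝ))
    (N : ℕ) (hN : 1 ≤ N) (a b : Fin N → ℝ)
    (hdir : ∀ i, IsDirectedInterval φ (a i) (b i))
    (hall : ∀ x y : ℝ, IsDirectedInterval φ x y → ∃ i, a i = x ∧ b i = y)
    (horder : ∀ i j : Fin N, (i : ℕ) + 1 = (j : ℕ) → b i ≤ a j) :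
    φ (a ⟨0, hN⟩) = φ 0 ∧ φ (b ⟨N - 1, by omega⟩) = φ 1 ∧
      (∀ i j : Fin N, (i : ℕ) + 1 = (j : ℕ) → φ (a j) = φ (b i)) ∧
      (∀ i j : Fin N, (i : ℕ) + 1 = (j : ℕ) →
        ((φ (a i) = 0 ∧ φ (b i) = 1) ↔ (φ (a j) = 1 ∧ φ (b j) = 0))) := by
  have ha : Monotone a := Fin.monotone_of_le_of_val_add_one_eq fun i j hij =>
    (hdir i).lt.le.trans (horder i j hij)
  have hb : Monotone b := Fin.monotone_of_le_of_val_add_one_eq fun i j hij =>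
    (horder i j hij).trans (hdir j).lt.le
  have hsame := eq_of_forall_not_subset hφ.continuousOn hmaps hall
  have hnext : ∀ i j : Fin N, (i : ℕ) + 1 = (j : ℕ) → φ (a j) = φ (b i) := by
    intro i j hij
    refine (hsame _ _ (hdir i).right_nonneg (horder i j hij) (hdir j).left_le_one
      (hdir i).right_mem (hdir j).left_mem fun k hbi hbk => ?_).symm
    rcases le_or_gt k i with hki | hik
    · exact (hdir k).lt.not_ge ((hb hki).trans hbi)
    · exact (hdir k).lt.not_ge (hbk.trans (ha (Fin.le_def.2 (by omega))))
  have hfirst : φ 0 = φ (a ⟨0, hN⟩) :=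
    hsame _ _ le_rfl (hdir _).left_nonneg (hdir _).left_le_one h0 (hdir _).left_mem
      fun k _ hk => (hdir k).lt.not_ge (hk.trans (ha (Nat.zero_le _)))
  have hlast : φ (b ⟨N - 1, by omega⟩) = φ 1 :=
    hsame _ _ (hdir _).right_nonneg (hdir _).right_le_one le_rfl (hdir _).right_mem h1
      fun k hk _ => (hdir k).lt.not_ge ((hb (Nat.le_sub_one_of_lt k.2)).trans hk)
  refine ⟨hfirst.symm, hlast, hnext, fun i j hij => ?_⟩
  rw [(hdir i).ascending_iff, (hdir j).descending_iff, hnext i j hij]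
end

section
/- The topological entropy of the full tent map T restricted to [0,1] (as a self-map of the compact metric space [0,1]) equals log 2. -/
open Set

/-- The full tent map `T x = 1 - |2x - 1|`, restricted to a self-map of the compact
metric space `[0,1]`. -/
noncomputable def tentMapRestricted : Icc (0 : ℝ) 1 → Icc (0 : ℝ) 1 := fun x =>
  ⟨1 - |2 * (x : ℝ) - 1|, by
    obtain ⟨x, hx0, hx1⟩ := x
    constructor
    · simp only
      rw [sub_nonneg, abs_le]
      constructor <;> linarith
    · simp only
      have := abs_nonneg (2 * x - 1)
      linarith⟩

/-!
Upper bound: `T` is `2`-Lipschitz, so a `2⁻¹ ^ n * ε`-dense grid of `[0, 1]`, of size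
`O(2 ^ n / ε)`, is an `(ε, n)`-dynamical cover.

Lower bound: the laps `[2i, 2i + 1] / 2 ^ (n + 1)`, `i < 2 ^ n`, of `T^[n + 1]` are pairwise
`2⁻¹ ^ (n + 1)`-separated and each is mapped onto `[0, 1]` by `T^[n + 1]` (a horseshoe). Following
every itinerary through them yields `2 ^ (n * q)` orbits of length `(n + 1) * q` that are pairwise
separated, so the entropy is at least `n / (n + 1) * log 2` for every `n`.
-/

open Function Filter Metric Topology ENNReal ExpGrowth Uniformity
open scoped Finset SetRel NNReal

namespace Dynamics

section Horseshoe

variable {X ι : Type*} {T : X → X} {F : Set X} {U : SetRel X X} {m : ℕ} {A : ι → Set X}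

lemma isDynNetIn_of_pairwise_exists_notMem {V : SetRel X X} [V.IsSymm] {n : ℕ} {s : Set X}
    (hsF : s ⊆ F) (hs : s.Pairwise fun x y ↦ ∃ k < n, (T^[k] x, T^[k] y) ∉ V ○ V) :
    IsDynNetIn T F V n s := by
  refine ⟨hsF, fun x hx y hy hxy ↦ disjoint_left.2 fun z hzx hzy ↦ ?_⟩
  obtain ⟨k, hk, hsep⟩ := hs hy hx hxy.symm
  exact hsep (mem_dynEntourage.1 (mem_ball_dynEntourage_comp T n x y ⟨z, hzx, hzy⟩) k hk)

/-- One orbit for each itinerary of length `q` through the pieces `A i` of the horseshoe. -/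
lemma exists_finset_pairwise_separated_of_horseshoe [UniformSpace X] [Fintype ι] [Nonempty ι]
    (hU : U ∈ 𝓤 X) (hm : m ≠ 0) (hA : ∀ i, (A i).Nonempty) (hsurj : ∀ i j, SurjOn T^[m] (A i) (A j))
    (hsep : Pairwise fun i j ↦ ∀ x ∈ A i, ∀ y ∈ A j, (x, y) ∉ U) (q : ℕ) :
    ∃ s : Finset X, (↑s ⊆ ⋃ i, A i) ∧ #s = Fintype.card ι ^ q ∧
      (s : Set X).Pairwise fun x y ↦ ∃ k < m * q, (T^[k] x, T^[k] y) ∉ U := by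
  classical
  induction q with
  | zero =>
    obtain ⟨x, hx⟩ := hA (Classical.arbitrary ι)
    exact ⟨{x}, by simpa using mem_iUnion_of_mem _ hx, by simp, by simp⟩
  | succ q ih =>
    obtain ⟨s, hsA, hcard, hs⟩ := ih
    have hlift : ∀ i, ∀ y ∈ ⋃ j, A j, ∃ x ∈ A i, T^[m] x = y := fun i y hy ↦ by
      obtain ⟨j, hj⟩ := mem_iUnion.1 hy
      exact hsurj i j hj
    choose! g hgA hgT using hlift
    have hsep_lift : ∀ p ∈ (Finset.univ ×ˢ s : Finset (ι × X)), ∀ p' ∈ (Finset.univ ×ˢ s), p ≠ p' →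
        ∃ k < m * (q + 1), (T^[k] (g p.1 p.2), T^[k] (g p'.1 p'.2)) ∉ U := by
      rintro ⟨i, x⟩ hp ⟨j, y⟩ hp' hne
      simp only [Finset.mem_product, Finset.mem_univ, true_and] at hp hp'
      obtain rfl | hij := eq_or_ne i j
      · have hxy : x ≠ y := fun h ↦ hne (by rw [h])
        obtain ⟨k, hk, hxy⟩ := hs hp hp' hxy
        refine ⟨k + m, by linarith, ?_⟩
        rwa [iterate_add_apply, iterate_add_apply, hgT i x (hsA hp), hgT i y (hsA hp')]
      · exact ⟨0, Nat.mul_pos (Nat.pos_of_ne_zero hm) q.succ_pos,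
          hsep hij _ (hgA i x (hsA hp)) _ (hgA j y (hsA hp'))⟩
    refine ⟨(Finset.univ ×ˢ s).image fun p ↦ g p.1 p.2, ?_, ?_, ?_⟩
    · simp only [Finset.coe_image, image_subset_iff]
      rintro ⟨i, x⟩ hp
      simp only [Finset.coe_product, Finset.coe_univ, mem_prod, mem_univ, true_and,
        Finset.mem_coe] at hp
      exact mem_iUnion_of_mem i (hgA i x (hsA hp))
    · rw [Finset.card_image_of_injOn, Finset.card_product, Finset.card_univ, hcard, pow_succ']
      intro p hp p' hp' hpp'
      by_contra hne
      obtain ⟨k, -, hk⟩ := hsep_lift p hp p' hp' hne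
      exact hk (by rw [show g p.1 p.2 = g p'.1 p'.2 from hpp']; exact refl_mem_uniformity hU)
    · simp only [Finset.coe_image]
      rintro _ ⟨p, hp, rfl⟩ _ ⟨p', hp', rfl⟩ hne
      exact hsep_lift p hp p' hp' fun h ↦ hne (by rw [h])

theorem log_card_div_le_coverEntropy_of_horseshoe [UniformSpace X] [Fintype ι]
    (hU : U ∈ 𝓤 X) (hm : m ≠ 0) (hAF : ∀ i, A i ⊆ F) (hA : ∀ i, (A i).Nonempty)
    (hsurj : ∀ i j, SurjOn T^[m] (A i) (A j))
    (hsep : Pairwise fun i j ↦ ∀ x ∈ A i, ∀ y ∈ A j, (x, y) ∉ U) :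
    log (Fintype.card ι) / m ≤ coverEntropy T F := by
  rw [EReal.div_le_iff_le_mul (by exact_mod_cast Nat.pos_of_ne_zero hm) (EReal.natCast_ne_top m)]
  cases isEmpty_or_nonempty ι
  · simp
  obtain ⟨V, hV, hVsymm, hVU⟩ := comp_symm_mem_uniformity_sets hU
  have hnet (q : ℕ) : ((Fintype.card ι ^ q : ℕ) : ℝ≥0∞) ≤ netMaxcard T F V (m * q) := by
    obtain ⟨s, hsA, hcard, hs⟩ :=
      exists_finset_pairwise_separated_of_horseshoe hU hm hA hsurj hsep q
    rw [← hcard]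
    exact ENat.toENNReal_le.2 <| IsDynNetIn.card_le_netMaxcard <|
      isDynNetIn_of_pairwise_exists_notMem (hsA.trans (iUnion_subset hAF))
        (hs.mono' fun x y ⟨k, hk, hxy⟩ ↦ ⟨k, hk, fun h ↦ hxy (hVU h)⟩)
  have hmono : Monotone fun n ↦ (netMaxcard T F V n : ℝ≥0∞) :=
    fun _ _ h ↦ ENat.toENNReal_mono (netMaxcard_monotone_time T F V h)
  calc log (Fintype.card ι)
      = expGrowthSup fun q ↦ ((Fintype.card ι ^ q : ℕ) : ℝ≥0∞) := by
        push_cast; exact expGrowthSup_pow.symm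
    _ ≤ expGrowthSup fun q ↦ (netMaxcard T F V (m * q) : ℝ≥0∞) := expGrowthSup_monotone hnet
    _ = m * netEntropyEntourage T F V := hmono.expGrowthSup_comp_mul hm
    _ ≤ m * coverEntropy T F := by
        gcongr
        exact netEntropyEntourage_le_coverEntropy T F hV

end Horseshoe

section Lipschitz

variable {X : Type*} [PseudoMetricSpace X] {T : X → X} {F : Set X} {K : ℝ≥0}

lemma _root_.LipschitzWith.isDynCoverOf_dist_lt (hT : LipschitzWith K T) (hK : 1 ≤ K) {n : ℕ}
    {δ ε : ℝ} (hδε : K ^ n * δ ≤ ε) {s : Set X} (hs : F ⊆ ⋃ x ∈ s, ball x δ) :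
    IsDynCoverOf T F {p | dist p.1 p.2 < ε} n s := by
  intro x hx
  obtain ⟨y, hy, hxy⟩ := mem_iUnion₂.1 (hs hx)
  refine ⟨y, hy, mem_dynEntourage.2 fun k hk ↦ ?_⟩
  calc dist (T^[k] x) (T^[k] y) ≤ K ^ k * dist x y := by
        simpa using (hT.iterate k).dist_le_mul x y
    _ < K ^ k * δ := mul_lt_mul_of_pos_left (mem_ball.1 hxy) (by positivity)
    _ ≤ K ^ n * δ := mul_le_mul_of_nonneg_right (pow_le_pow_right₀ (mod_cast hK) hk.le)
        (dist_nonneg.trans (mem_ball.1 hxy).le)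
    _ ≤ ε := hδε

theorem coverEntropy_le_log_of_lipschitzWith (hT : LipschitzWith K T) (hK : 1 ≤ K) {C : ℝ}
    (hF : ∀ δ ∈ Ioc (0 : ℝ) 1, ∃ s : Finset X, F ⊆ ⋃ x ∈ s, ball x δ ∧ #s ≤ C / δ) :
    coverEntropy T F ≤ log K := by
  rw [coverEntropy_eq_iSup_basis uniformity_basis_dist]
  refine iSup₂_le fun ε hε ↦ ?_
  set ε' := min ε 1
  have hε' : 0 < ε' := lt_min hε one_pos
  have hKn (n : ℕ) : (0 : ℝ) < K ^ n := pow_pos (zero_lt_one.trans_le hK) n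
  have hcard (n : ℕ) : (coverMincard T F {p | dist p.1 p.2 < ε'} n : ℝ≥0∞)
      ≤ ENNReal.ofReal (C / ε') * (K : ℝ≥0∞) ^ n := by
    have hδ : ε' / K ^ n ≤ 1 :=
      div_le_one_of_le₀ ((min_le_right _ _).trans (one_le_pow₀ hK)) (hKn n).le
    obtain ⟨s, hs, hsC⟩ := hF (ε' / K ^ n) ⟨div_pos hε' (hKn n), hδ⟩
    have hcov := hT.isDynCoverOf_dist_lt hK (n := n) (by rw [mul_div_cancel₀ _ (hKn n).ne']) hs
    calc (coverMincard T F {p | dist p.1 p.2 < ε'} n : ℝ≥0∞) ≤ (#s : ℝ≥0∞) :=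
          ENat.toENNReal_le.2 hcov.coverMincard_le_card
      _ = ENNReal.ofReal #s := (ofReal_natCast _).symm
      _ ≤ ENNReal.ofReal (C / ε' * K ^ n) := by
          gcongr
          rwa [div_div_eq_mul_div, mul_div_right_comm] at hsC
      _ = ENNReal.ofReal (C / ε') * (K : ℝ≥0∞) ^ n := by
          rw [ENNReal.ofReal_mul' (hKn n).le, ← NNReal.coe_pow, ofReal_coe_nnreal, ENNReal.coe_pow]
  calc coverEntropyEntourage T F {p | dist p.1 p.2 < ε}
      ≤ coverEntropyEntourage T F {p | dist p.1 p.2 < ε'} :=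
        coverEntropyEntourage_antitone T F fun p (hp : dist p.1 p.2 < ε') ↦
          show dist p.1 p.2 < ε from hp.trans_le (min_le_left _ _)
    _ ≤ expGrowthSup fun n ↦ (K : ℝ≥0∞) ^ n :=
        expGrowthSup_le_of_eventually_le ofReal_ne_top (Eventually.of_forall hcard)
    _ = log K := expGrowthSup_pow

end Lipschitz

end Dynamics

open Dynamics

noncomputable def tent (x : ℝ) : ℝ := 1 - |2 * x - 1|

lemma continuous_tent : Continuous tent := by unfold tent; fun_prop

lemma tent_of_le_half {x : ℝ} (hx : x ≤ 1 / 2) : tent x = 2 * x := by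
  rw [tent, abs_of_nonpos (by linarith)]; ring

lemma tent_of_half_le {x : ℝ} (hx : 1 / 2 ≤ x) : tent x = 2 - 2 * x := by
  rw [tent, abs_of_nonneg (by linarith)]; ring

lemma coe_iterate_tentMapRestricted (k : ℕ) (x : Icc (0 : ℝ) 1) :
    ((tentMapRestricted^[k] x : Icc (0 : ℝ) 1) : ℝ) = tent^[k] x := by
  induction k with
  | zero => rfl
  | succ k ih => rw [iterate_succ_apply', iterate_succ_apply', ← ih]; rfl

lemma tent_iterate_natCast_div_two_pow {m j : ℕ} (hj : j ≤ 2 ^ m) :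
    tent^[m] (j / 2 ^ m) = (j % 2 : ℕ) := by
  induction m generalizing j with
  | zero => interval_cases j <;> simp
  | succ m ih =>
    rw [iterate_succ_apply]
    rcases le_or_gt j (2 ^ m) with hjm | hjm
    · have hjm' : (j : ℝ) ≤ 2 ^ m := by exact_mod_cast hjm
      rw [tent_of_le_half, show 2 * ((j : ℝ) / 2 ^ (m + 1)) = j / 2 ^ m by ring, ih hjm]
      rw [div_le_iff₀ (by positivity), pow_succ]
      linarith
    · have hpow : 2 ^ (m + 1) = 2 * 2 ^ m := pow_succ' 2 m
      have hjm' : (2 : ℝ) ^ m < j := by exact_mod_cast hjm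
      have hj' : ((2 ^ (m + 1) - j : ℕ) : ℝ) = 2 ^ (m + 1) - j := by
        push_cast [Nat.cast_sub hj]; ring
      rw [tent_of_half_le, show 2 - 2 * ((j : ℝ) / 2 ^ (m + 1)) = (2 ^ (m + 1) - j : ℕ) / 2 ^ m by
        rw [hj']; field_simp; ring, ih (j := 2 ^ (m + 1) - j) (by omega)]
      · congr 1
        omega
      · rw [le_div_iff₀ (by positivity), pow_succ]
        linarith


lemma abs_tent_sub_tent_le (x y : ℝ) : |tent x - tent y| ≤ 2 * |x - y| :=
  calc |tent x - tent y| = abs (|2 * y - 1| - |2 * x - 1|) := by unfold tent; ring_nf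
    _ ≤ |(2 * y - 1) - (2 * x - 1)| := abs_abs_sub_abs_le_abs_sub _ _
    _ = 2 * |x - y| := by
        rw [abs_sub_comm, show 2 * x - 1 - (2 * y - 1) = 2 * (x - y) by ring, abs_mul, abs_two]

lemma lipschitzWith_tentMapRestricted : LipschitzWith 2 tentMapRestricted :=
  LipschitzWith.of_dist_le_mul fun x y ↦ abs_tent_sub_tent_le x y

lemma exists_finset_Icc_zero_one_subset_iUnion_ball {δ : ℝ} (hδ : δ ∈ Ioc 0 1) :
    ∃ s : Finset (Icc (0 : ℝ) 1), univ ⊆ ⋃ x ∈ s, ball x δ ∧ (#s : ℝ) ≤ 3 / δ := by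
  obtain ⟨hδ0, hδ1⟩ := hδ
  set N := ⌈1 / δ⌉₊
  have hN : 1 / δ ≤ N := Nat.le_ceil _
  have hN0 : (0 : ℝ) < N := (one_div_pos.2 hδ0).trans_le hN
  set grid := (Finset.range (N + 1)).image fun i : ℕ ↦ projIcc 0 1 zero_le_one (i / N : ℝ)
  refine ⟨grid, fun x _ ↦ ?_, ?_⟩
  · obtain ⟨x, hx0, hx1⟩ := x
    set i := ⌊x * N⌋₊
    have hi : (i : ℝ) ≤ x * N := Nat.floor_le (by positivity)
    have hi' : x * N < i + 1 := Nat.lt_floor_add_one _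
    refine mem_iUnion₂.2 ⟨_, Finset.mem_image_of_mem _ (Finset.mem_range.2
      (Nat.lt_succ_of_le (Nat.floor_le_of_le (mul_le_of_le_one_left hN0.le hx1)))), ?_⟩
    rw [mem_ball, Subtype.dist_eq, Real.dist_eq, ← projIcc_of_mem zero_le_one ⟨hx0, hx1⟩]
    refine (abs_projIcc_sub_projIcc zero_le_one).trans_lt ?_
    rw [abs_of_nonneg (by rw [sub_nonneg, div_le_iff₀ hN0]; exact hi)]
    calc x - i / N < 1 / N := by rw [sub_lt_iff_lt_add', ← add_div, lt_div_iff₀ hN0]; linarith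
      _ ≤ δ := by rw [div_le_iff₀ hN0]; rwa [div_le_iff₀ hδ0, mul_comm] at hN
  · have hcard : #grid ≤ N + 1 := Finset.card_image_le.trans (Finset.card_range _).le
    calc (#grid : ℝ) ≤ N + 1 := by exact_mod_cast hcard
      _ ≤ 1 / δ + 2 := by linarith [Nat.ceil_lt_add_one (one_div_pos.2 hδ0).le]
      _ ≤ 3 / δ := by
          rw [div_add' _ _ _ hδ0.ne']
          gcongr
          linarith

lemma coverEntropy_tentMapRestricted_le :
    coverEntropy tentMapRestricted univ ≤ (Real.log 2 : EReal) := by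
  refine (coverEntropy_le_log_of_lipschitzWith lipschitzWith_tentMapRestricted one_le_two
    fun δ hδ ↦ exists_finset_Icc_zero_one_subset_iUnion_ball hδ).trans_eq ?_
  rw [ENNReal.coe_ofNat, ← ofReal_ofNat, log_ofReal_of_pos two_pos]

/-- Every other lap of `T^[n + 1]`. -/
def tentHorseshoe (n : ℕ) (i : Fin (2 ^ n)) : Set (Icc (0 : ℝ) 1) :=
  {x | (x : ℝ) ∈ Icc (2 * (i : ℝ) / 2 ^ (n + 1)) ((2 * i + 1) / 2 ^ (n + 1))}

lemma tentHorseshoe_bounds (n : ℕ) (i : Fin (2 ^ n)) :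
    0 ≤ (2 * i / 2 ^ (n + 1) : ℝ) ∧ ((2 * i + 1) / 2 ^ (n + 1) : ℝ) ≤ 1 := by
  refine ⟨by positivity, (div_le_one (by positivity)).2 ?_⟩
  have : (i : ℝ) + 1 ≤ 2 ^ n := by exact_mod_cast i.isLt
  rw [pow_succ]
  linarith

lemma tentHorseshoe_nonempty (n : ℕ) (i : Fin (2 ^ n)) : (tentHorseshoe n i).Nonempty := by
  have ⟨h0, h1⟩ := tentHorseshoe_bounds n i
  have hle : (2 * i / 2 ^ (n + 1) : ℝ) ≤ (2 * i + 1) / 2 ^ (n + 1) := by gcongr; linarith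
  exact ⟨⟨_, h0, hle.trans h1⟩, left_mem_Icc.2 hle⟩

lemma surjOn_iterate_tentHorseshoe (n : ℕ) (i : Fin (2 ^ n)) :
    SurjOn tentMapRestricted^[n + 1] (tentHorseshoe n i) univ := by
  have ⟨h0, h1⟩ := tentHorseshoe_bounds n i
  have hle : (2 * i / 2 ^ (n + 1) : ℝ) ≤ (2 * i + 1) / 2 ^ (n + 1) := by gcongr; linarith
  have hi : 2 * (i : ℕ) + 1 ≤ 2 ^ (n + 1) := by rw [pow_succ]; omega
  have hleft : tent^[n + 1] (2 * i / 2 ^ (n + 1)) = 0 := by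
    simpa using tent_iterate_natCast_div_two_pow (m := n + 1) (j := 2 * i) (by omega)
  have hright : tent^[n + 1] ((2 * i + 1) / 2 ^ (n + 1)) = 1 := by
    simpa [Nat.mul_add_mod] using tent_iterate_natCast_div_two_pow (m := n + 1) hi
  rintro ⟨y, hy⟩ -
  obtain ⟨x, hx, hxy⟩ := intermediate_value_Icc hle (continuous_tent.iterate _).continuousOn
    (by rwa [hleft, hright] : y ∈ Icc _ _)
  exact ⟨⟨x, h0.trans hx.1, hx.2.trans h1⟩, hx, Subtype.ext (by
    rw [coe_iterate_tentMapRestricted]; exact hxy)⟩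

lemma le_dist_of_mem_tentHorseshoe {n : ℕ} {i j : Fin (2 ^ n)} (hij : i ≠ j)
    {x y : Icc (0 : ℝ) 1} (hx : x ∈ tentHorseshoe n i) (hy : y ∈ tentHorseshoe n j) :
    1 / 2 ^ (n + 1) ≤ dist x y := by
  wlog hlt : i < j generalizing i j x y
  · rw [dist_comm]
    exact this hij.symm hy hx (lt_of_le_of_ne (not_lt.1 hlt) hij.symm)
  have hij' : (i : ℝ) + 1 ≤ j := by exact_mod_cast hlt
  have hgap : (2 * i + 1) / 2 ^ (n + 1) + 1 / 2 ^ (n + 1) ≤ (2 * j : ℝ) / 2 ^ (n + 1) := by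
    rw [← add_div]
    gcongr
    linarith
  rw [dist_comm, Subtype.dist_eq, Real.dist_eq]
  exact le_abs.2 (Or.inl (by linarith [hx.2, hy.1]))

lemma le_coverEntropy_tentMapRestricted (n : ℕ) :
    ((n * Real.log 2 / (n + 1) : ℝ) : EReal) ≤ coverEntropy tentMapRestricted univ := by
  convert log_card_div_le_coverEntropy_of_horseshoe (U := {p | dist p.1 p.2 < 1 / 2 ^ (n + 1)})
    (dist_mem_uniformity (by positivity)) n.succ_ne_zero (fun _ ↦ subset_univ _)
    (tentHorseshoe_nonempty n) (fun i _ ↦ (surjOn_iterate_tentHorseshoe n i).mono subset_rfl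
      (subset_univ _))
    fun i j hij x hx y hy ↦ not_lt.2 (le_dist_of_mem_tentHorseshoe hij hx hy)
  rw [Fintype.card_fin, Nat.cast_pow, log_pow, Nat.cast_ofNat, ← ofReal_ofNat,
    log_ofReal_of_pos two_pos, Nat.cast_succ, ← EReal.coe_coe_eq_natCast]
  norm_cast

/-- The topological entropy (Bowen–Dinaburg entropy via covers, for the metric uniformity
on `[0,1]`) of the full tent map on `[0,1]` is `log 2`. -/
theorem tent_map_coverEntropy :
    Dynamics.coverEntropy tentMapRestricted Set.univ = (Real.log 2 : EReal) := by
  have hlim : Tendsto (fun n : ℕ ↦ n * Real.log 2 / (n + 1)) atTop (𝓝 (Real.log 2)) := by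
    simpa [mul_div_right_comm] using (tendsto_natCast_div_add_atTop (1 : ℝ)).mul_const (Real.log 2)
  exact le_antisymm coverEntropy_tentMapRestricted_le <|
    le_of_tendsto' ((continuous_coe_real_ereal.tendsto _).comp hlim)
      le_coverEntropy_tentMapRestricted
end
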